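/- arXiv:1205.0729 — 3 statements merged into one kernel-verified Lean document; each statement's English description precedes it below -/
import Mathlib

section
/- Let ε > 0, and suppose ξ₁, ξ₂ ∈ ℝ satisfy |ξ₁| > √(17/(80ε)), |ξ₂| > √(17/(80ε)) and |ξ₁ + ξ₂| ∈ [√(17/(80ε)), √(2/(5ε))]. Then |3 − 5ε((ξ₁+ξ₂)² − ξ₁ξ₂)| ≥ 3/16. -/
private lemma key_ineq (m a b : ℝ) (hm : 0 < m) (ha : m < a ^ 2) (hb : m < b ^ 2)
    (hab : m ≤ (a - b) ^ 2) (ha0 : 0 < a) (hb0 : 0 < b) :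
    3 * m ≤ (a - b) ^ 2 + a * b := by
  rcases le_total b a with h | h
  · have hdb : m ≤ (a - b) * b := by
      nlinarith [mul_nonneg (sub_nonneg.2 h) hb0.le, sq_nonneg ((a - b) * b - m)]
    nlinarith
  · have hdb : m ≤ (b - a) * a := by
      nlinarith [mul_nonneg (sub_nonneg.2 h) ha0.le, sq_nonneg ((b - a) * a - m)]
    nlinarith

theorem gamma_lower_bound (ε ξ₁ ξ₂ : ℝ) (hε : 0 < ε)
    (h₁ : Real.sqrt (17 / (80 * ε)) < |ξ₁|)
    (h₂ : Real.sqrt (17 / (80 * ε)) < |ξ₂|)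
    (hlo : Real.sqrt (17 / (80 * ε)) ≤ |ξ₁ + ξ₂|)
    (hhi : |ξ₁ + ξ₂| ≤ Real.sqrt (2 / (5 * ε))) :
    3 / 16 ≤ |3 - 5 * ε * ((ξ₁ + ξ₂) ^ 2 - ξ₁ * ξ₂)| := by
  set m : ℝ := 17 / (80 * ε) with hm_def
  have hm : 0 < m := by positivity
  have h1 : m < ξ₁ ^ 2 := by
    calc m = Real.sqrt m ^ 2 := (Real.sq_sqrt hm.le).symm
    _ < |ξ₁| ^ 2 := by exact pow_lt_pow_left₀ h₁ (Real.sqrt_nonneg _) two_ne_zero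
    _ = ξ₁ ^ 2 := sq_abs ξ₁
  have h2 : m < ξ₂ ^ 2 := by
    calc m = Real.sqrt m ^ 2 := (Real.sq_sqrt hm.le).symm
    _ < |ξ₂| ^ 2 := by exact pow_lt_pow_left₀ h₂ (Real.sqrt_nonneg _) two_ne_zero
    _ = ξ₂ ^ 2 := sq_abs ξ₂
  have hl : m ≤ (ξ₁ + ξ₂) ^ 2 := by
    calc m = Real.sqrt m ^ 2 := (Real.sq_sqrt hm.le).symm
    _ ≤ |ξ₁ + ξ₂| ^ 2 := pow_le_pow_left₀ (Real.sqrt_nonneg _) hlo 2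
    _ = (ξ₁ + ξ₂) ^ 2 := sq_abs _
  have hh : (ξ₁ + ξ₂) ^ 2 ≤ 2 / (5 * ε) := by
    calc (ξ₁ + ξ₂) ^ 2 = |ξ₁ + ξ₂| ^ 2 := (sq_abs _).symm
    _ ≤ Real.sqrt (2 / (5 * ε)) ^ 2 := pow_le_pow_left₀ (abs_nonneg _) hhi 2
    _ = 2 / (5 * ε) := Real.sq_sqrt (by positivity)
  have hm32 : 2 / (5 * ε) = 32 / 17 * m := by
    rw [hm_def]; field_simp; ring
  have hneg : ξ₁ * ξ₂ < 0 := by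
    by_contra hge
    push_neg at hge
    nlinarith [hh, hm32, h1, h2]
  have hQ : 3 * m ≤ (ξ₁ + ξ₂) ^ 2 - ξ₁ * ξ₂ := by
    rcases mul_neg_iff.mp hneg with ⟨hx, hy⟩ | ⟨hx, hy⟩
    · have hk := key_ineq m ξ₁ (-ξ₂) hm h1 (by simpa using h2)
        (by rw [sub_neg_eq_add]; exact hl) hx (neg_pos.2 hy)
      have e : (ξ₁ - -ξ₂) ^ 2 + ξ₁ * -ξ₂ = (ξ₁ + ξ₂) ^ 2 - ξ₁ * ξ₂ := by ring
      linarith [hk, e.ge, e.le]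
    · have hk := key_ineq m ξ₂ (-ξ₁) hm h2 (by simpa using h1)
        (by rw [sub_neg_eq_add]; rw [add_comm]; exact hl) hy (neg_pos.2 hx)
      have e : (ξ₂ - -ξ₁) ^ 2 + ξ₂ * -ξ₁ = (ξ₁ + ξ₂) ^ 2 - ξ₁ * ξ₂ := by ring
      linarith [hk, e.ge, e.le]
  have h51 : (51 : ℝ) / 16 ≤ 5 * ε * ((ξ₁ + ξ₂) ^ 2 - ξ₁ * ξ₂) := by
    have h := mul_le_mul_of_nonneg_left hQ (by positivity : (0 : ℝ) ≤ 5 * ε)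
    have e : 5 * ε * (3 * m) = 51 / 16 := by
      rw [hm_def]; field_simp; ring
    linarith
  exact le_abs.mpr (Or.inr (by linarith))
end

section
/- Let ξ, ξ₁ ∈ ℝ with |ξ₁| ≤ 2⁻⁷|ξ|, and let ε > 0 with |ξ| ∉ [ (15/16)√(3/(5ε)), (17/16)√(3/(5ε)) ]. Then |3 − 5ε(ξ² − ξ₁(ξ−ξ₁))| ≥ 2⁻⁵. -/
theorem gamma_bound_outside_J (ε ξ ξ₁ : ℝ) (hε : 0 < ε)
    (h : |ξ₁| ≤ 2⁻¹ ^ 7 * |ξ|)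
    (hJ : |ξ| ∉ Set.Icc ((15 / 16) * Real.sqrt (3 / (5 * ε)))
      ((17 / 16) * Real.sqrt (3 / (5 * ε)))) :
    2⁻¹ ^ 5 ≤ |3 - 5 * ε * (ξ ^ 2 - ξ₁ * (ξ - ξ₁))| := by
  set s := Real.sqrt (3 / (5 * ε)) with hs
  have h5ε : (0:ℝ) < 5 * ε := by linarith
  have hs2 : s ^ 2 = 3 / (5 * ε) := Real.sq_sqrt (by positivity)
  have hss : 5 * ε * s ^ 2 = 3 := by rw [hs2]; field_simp
  have habs : |ξ₁| * |ξ| ≤ 2⁻¹ ^ 7 * ξ ^ 2 := by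
    nlinarith [abs_nonneg ξ, abs_nonneg ξ₁, sq_abs ξ]
  have hx1 : ξ₁ ^ 2 ≤ 2⁻¹ ^ 14 * ξ ^ 2 := by
    nlinarith [abs_nonneg ξ, abs_nonneg ξ₁, sq_abs ξ, sq_abs ξ₁]
  have hmul : |ξ₁ * ξ| ≤ 2⁻¹ ^ 7 * ξ ^ 2 := by rw [abs_mul]; exact habs
  have hmul1 : -(2⁻¹ ^ 7 * ξ ^ 2) ≤ ξ₁ * ξ := neg_le_of_abs_le hmul
  have hmul2 : ξ₁ * ξ ≤ 2⁻¹ ^ 7 * ξ ^ 2 := le_of_abs_le hmul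
  simp only [Set.mem_Icc, not_and_or, not_le] at hJ
  have hsq : |ξ| ^ 2 = ξ ^ 2 := sq_abs ξ
  rcases hJ with hJ | hJ
  · have hξ2 : ξ ^ 2 ≤ (15/16) ^ 2 * s ^ 2 := by nlinarith [abs_nonneg ξ]
    have key : 2⁻¹ ^ 5 ≤ 3 - 5 * ε * (ξ ^ 2 - ξ₁ * (ξ - ξ₁)) := by nlinarith
    exact key.trans (le_abs_self _)
  · have hsnn : 0 ≤ s := Real.sqrt_nonneg _
    have hξ2 : (17/16) ^ 2 * s ^ 2 ≤ ξ ^ 2 := by nlinarith [abs_nonneg ξ]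
    have key : 2⁻¹ ^ 5 ≤ -(3 - 5 * ε * (ξ ^ 2 - ξ₁ * (ξ - ξ₁))) := by nlinarith
    exact key.trans (neg_le_abs _)
end

section
/- Let t ≠ 0, ε > 0, and set Φ(θ) = θ³ − (ε/|t|^{2/3})θ⁵. If θ ∈ ℝ satisfies |θ| ≥ 100 and |θ| ∉ [√(|t|^{2/3}/(4ε)), √(7|t|^{2/3}/(20ε))], then |Φ''(θ)| ≥ c(1 + max(|θ|, (ε/|t|^{2/3})|θ|³)) for some absolute constant c > 0. -/
theorem second_derivative_phase_lower_bound :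
    ∃ c : ℝ, 0 < c ∧ ∀ (t ε θ : ℝ), t ≠ 0 → 0 < ε → 100 ≤ |θ| →
      |θ| ∉ Set.Icc (Real.sqrt (|t| ^ ((2 : ℝ) / 3) / (4 * ε)))
        (Real.sqrt (7 * |t| ^ ((2 : ℝ) / 3) / (20 * ε))) →
      c * (1 + max |θ| (ε / |t| ^ ((2 : ℝ) / 3) * |θ| ^ 3)) ≤
        |2 * θ * (3 - 10 * (ε / |t| ^ ((2 : ℝ) / 3)) * θ ^ 2)| := by
  refine ⟨1/2, by norm_num, ?_⟩
  intro t ε θ ht hε hθ hnot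
  have hA0 : 0 < |t| ^ ((2 : ℝ) / 3) :=
    Real.rpow_pos_of_pos (abs_pos.mpr ht) _
  set A := |t| ^ ((2 : ℝ) / 3) with hA
  set l := ε / A with hl
  have hl0 : 0 < l := div_pos hε hA0
  set x := |θ| with hx
  have hx0 : (0:ℝ) ≤ x := abs_nonneg θ
  have hx100 : (100:ℝ) ≤ x := hθ
  have hsq : θ ^ 2 = x ^ 2 := (sq_abs θ).symm
  have habs : |2 * θ * (3 - 10 * l * θ ^ 2)| = 2 * x * |3 - 10 * l * x ^ 2| := by
    rw [abs_mul, abs_mul, abs_two, hsq, ← hx]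
  rw [habs]
  have himp : Real.sqrt (A / (4 * ε)) ≤ x → Real.sqrt (7 * A / (20 * ε)) < x := by
    simpa [Set.mem_Icc] using hnot
  rcases lt_or_ge x (Real.sqrt (A / (4 * ε))) with h1 | hge
  · -- small case : l * x^2 ≤ 1/4
    have h1' : x ^ 2 < A / (4 * ε) := (Real.lt_sqrt hx0).mp h1
    have hkey : l * x ^ 2 ≤ 1/4 := by
      rw [hl, div_mul_eq_mul_div, div_le_div_iff₀ hA0 (by norm_num : (0:ℝ) < 4)]
      have := (lt_div_iff₀ (by positivity : (0:ℝ) < 4 * ε)).mp h1'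
      nlinarith
    have hmax : max x (l * x ^ 3) = x := by
      apply max_eq_left
      nlinarith
    rw [hmax]
    have hpos : (0:ℝ) ≤ 3 - 10 * l * x ^ 2 := by nlinarith
    rw [abs_of_nonneg hpos]
    nlinarith
  · -- large case : 7/20 ≤ l * x^2
    have h2 := himp hge
    have h2' : 7 * A / (20 * ε) < x ^ 2 := by
      have := Real.sqrt_lt' (by linarith : (0:ℝ) < x) |>.mp h2
      linarith
    have hkey : 7/20 ≤ l * x ^ 2 := by
      rw [hl, div_mul_eq_mul_div, le_div_iff₀ hA0]
      have := (div_lt_iff₀ (by positivity : (0:ℝ) < 20 * ε)).mp h2'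
      nlinarith
    have hneg : 3 - 10 * l * x ^ 2 ≤ 0 := by nlinarith
    rw [abs_of_nonpos hneg]
    have hmaxle : max x (l * x ^ 3) ≤ x + l * x ^ 3 :=
      max_le (le_add_of_nonneg_right (by positivity)) (le_add_of_nonneg_left hx0)
    nlinarith [mul_le_mul_of_nonneg_right hkey hx0]
end
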